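/- Let d = 2^n and let r ≥ 1 with 2^{m-1} < r ≤ 2^m for some m ≤ n. In the recursive matching construction for dimension 2^n, the number of matchings containing at least one pair (j,k) with |j−k| ≤ r is at most 2^m − 1 + r(n − m), which is strictly less than r·(log₂ d + 2 − m) ≤ r·log₂(4d/r). -/

import Mathlib

/-!
Shifting a matching by `2 ^ t` preserves the differences `k - j` of its pairs, so a merged
matching has a pair of difference at most `r` exactly when the matching it comes from does.
Every pair of the `m`-th crossed matching of size `N` has a positive difference congruent to
`m` modulo `N`, so at most `r` crossed matchings have a pair of difference at most `r`.
Hence, from the trivial bound `2 ^ m - 1` at level `m`, each further level adds at most `r`.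
The two real inequalities reduce to `2 ^ m < 2 r` and `log₂ r ≤ m`.
-/

/-- A matching on {0,...,d-1}: a finite set of pairs (j,k) with j < k < d,
pairwise vertex-disjoint. -/
def IsMatchingOn (d : ℕ) (M : Finset (ℕ × ℕ)) : Prop :=
  (∀ p ∈ M, p.1 < p.2 ∧ p.2 < d) ∧
  (∀ p ∈ M, ∀ q ∈ M, p ≠ q →
    p.1 ≠ q.1 ∧ p.1 ≠ q.2 ∧ p.2 ≠ q.1 ∧ p.2 ≠ q.2)

/-- A perfect matching on {0,...,d-1}: a matching covering every vertex. -/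
def IsPerfectMatchingOn (d : ℕ) (M : Finset (ℕ × ℕ)) : Prop :=
  IsMatchingOn d M ∧ ∀ v < d, ∃ p ∈ M, v = p.1 ∨ v = p.2

/-- The recursive construction of the 2^n - 1 matchings for dimension 2^n:
base case the single matching {(0,1)}; at each step, merge the previous matchings with
their shifts by 2^(n-1), and add the 2^(n-1) crossed matchings. -/
def construct : ℕ → List (Finset (ℕ × ℕ))
  | 0 => []
  | 1 => [({(0, 1)} : Finset (ℕ × ℕ))]
  | (n + 2) =>
      ((construct (n + 1)).map fun T =>
        T ∪ T.image fun p => (p.1 + 2 ^ (n + 1), p.2 + 2 ^ (n + 1))) ++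
      (List.range (2 ^ (n + 1))).map fun m =>
        (Finset.range (2 ^ (n + 1))).image fun k =>
          (k, 2 ^ (n + 1) + (k + m) % 2 ^ (n + 1))

theorem List.Nodup.countP_le_card {α : Type*} {l : List α} (hl : l.Nodup) {p : α → Bool}
    {s : Finset α} (h : ∀ x ∈ l, p x → x ∈ s) : l.countP p ≤ s.card := by
  classical
  rw [List.countP_eq_length_filter, ← List.toFinset_card_of_nodup (hl.filter p)]
  exact Finset.card_le_card fun x hx => by
    simp only [List.mem_toFinset, List.mem_filter] at hx
    exact h x hx.1 hx.2

theorem construct_length (n : ℕ) : (construct n).length = 2 ^ n - 1 := by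
  induction n using Nat.twoStepInduction with
  | zero => rfl
  | one => rfl
  | more n _ ih =>
    simp only [construct, List.length_append, List.length_map, ih, List.length_range]
    have := Nat.one_le_two_pow (n := n + 1)
    rw [pow_succ 2 (n + 1)]
    omega

theorem exists_sub_le_union_shift_iff (T : Finset (ℕ × ℕ)) (r s : ℕ) :
    (∃ p ∈ T ∪ T.image (fun p => (p.1 + s, p.2 + s)), p.2 - p.1 ≤ r) ↔
      ∃ p ∈ T, p.2 - p.1 ≤ r := by
  refine ⟨fun ⟨p, hp, hpr⟩ => ?_, fun ⟨p, hp, hpr⟩ => ⟨p, Finset.mem_union_left _ hp, hpr⟩⟩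
  rcases Finset.mem_union.mp hp with hp | hp
  · exact ⟨p, hp, hpr⟩
  · obtain ⟨q, hq, rfl⟩ := Finset.mem_image.mp hp
    exact ⟨q, hq, by rwa [Nat.add_sub_add_right] at hpr⟩

theorem crossed_sub_mod {N k m : ℕ} (hk : k < N) (hm : m < N) :
    0 < N + (k + m) % N - k ∧ (N + (k + m) % N - k) % N = m := by
  rcases Nat.lt_or_ge (k + m) N with h | h
  · rw [Nat.mod_eq_of_lt h, show N + (k + m) - k = m + N by omega, Nat.add_mod_right,
      Nat.mod_eq_of_lt hm]
    omega
  · rw [Nat.mod_eq_sub_mod h, Nat.mod_eq_of_lt (by omega), show N + (k + m - N) - k = m by omega,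
      Nat.mod_eq_of_lt hm]
    omega

theorem countP_crossed_le (N r : ℕ) :
    ((List.range N).map fun m => (Finset.range N).image fun k => (k, N + (k + m) % N)).countP
      (fun T => decide (∃ p ∈ T, p.2 - p.1 ≤ r)) ≤ r := by
  rw [List.countP_map]
  refine (List.nodup_range.countP_le_card (s := (Finset.Icc 1 r).image (· % N)) ?_).trans
    (Finset.card_image_le.trans (by simp))
  intro m hm hshort
  simp only [Function.comp_apply, decide_eq_true_eq, Finset.mem_image, Finset.mem_range,
    exists_exists_and_eq_and] at hshort
  obtain ⟨k, hk, hkr⟩ := hshort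
  obtain ⟨hpos, hmod⟩ := crossed_sub_mod hk (List.mem_range.mp hm)
  exact Finset.mem_image.mpr ⟨_, Finset.mem_Icc.mpr ⟨hpos, hkr⟩, hmod⟩

theorem countP_construct_succ_le (r n : ℕ) :
    (construct (n + 1)).countP (fun T => decide (∃ p ∈ T, p.2 - p.1 ≤ r)) ≤
      (construct n).countP (fun T => decide (∃ p ∈ T, p.2 - p.1 ≤ r)) + r := by
  cases n with
  | zero => by_cases hr : 1 ≤ r <;> simp [construct, hr]
  | succ n =>
    rw [construct, List.countP_append, List.countP_map]
    simp only [Function.comp_def, exists_sub_le_union_shift_iff]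
    exact Nat.add_le_add_left (countP_crossed_le _ r) _

theorem countP_construct_le {m n : ℕ} (r : ℕ) (hmn : m ≤ n) :
    (construct n).countP (fun T => decide (∃ p ∈ T, p.2 - p.1 ≤ r)) ≤
      2 ^ m - 1 + r * (n - m) := by
  induction n, hmn using Nat.le_induction with
  | base => simpa using List.countP_le_length.trans (construct_length m).le
  | succ n hmn ih =>
    rw [Nat.sub_add_comm hmn, Nat.mul_succ]
    have := countP_construct_succ_le r n
    omega

theorem logb_two_pow (n : ℕ) : Real.logb 2 (2 ^ n : ℝ) = n := by
  rw [Real.logb_pow, Real.logb_self_eq_one one_lt_two, mul_one]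

theorem two_pow_sub_one_add_mul_sub_lt {m n r : ℕ} (hmn : m ≤ n) (hlow : 2 ^ (m - 1) < r) :
    ((2 ^ m - 1 + r * (n - m) : ℕ) : ℝ) < r * (n + 2 - m) := by
  have h2m : 2 ^ m ≤ 2 * 2 ^ (m - 1) := by
    rw [← pow_succ']
    exact Nat.pow_le_pow_right two_pos (by omega)
  have hlt : 2 ^ m - 1 + r * (n - m) < r * (n - m + 2) := by
    rw [mul_add]
    omega
  have hcast : ((r * (n - m + 2) : ℕ) : ℝ) = r * (n + 2 - m) := by
    push_cast [Nat.cast_sub hmn]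
    ring
  exact hcast ▸ Nat.cast_lt.mpr hlt

theorem mul_add_two_sub_le_mul_logb_div {m n r : ℕ} (hr : 0 < r) (hhigh : r ≤ 2 ^ m) :
    (r : ℝ) * (n + 2 - m) ≤ r * Real.logb 2 (4 * 2 ^ n / r) := by
  have hr' : (0 : ℝ) < r := Nat.cast_pos.mpr hr
  have hlogb : Real.logb 2 r ≤ m := by
    rw [← logb_two_pow m]
    exact Real.logb_le_logb_of_le one_lt_two hr' (by exact_mod_cast hhigh)
  rw [show (4 : ℝ) * 2 ^ n = 2 ^ (n + 2) by ring, Real.logb_div (by positivity) hr'.ne',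
    logb_two_pow]
  push_cast
  gcongr

theorem stmt_13_general (n m r : ℕ) (hmn : m ≤ n)
    (hlow : 2 ^ (m - 1) < r) (hhigh : r ≤ 2 ^ m) :
    ((construct n).countP fun T => decide (∃ p ∈ T, p.2 - p.1 ≤ r))
        ≤ 2 ^ m - 1 + r * (n - m) ∧
    ((2 ^ m - 1 + r * (n - m) : ℕ) : ℝ)
        < r * (Real.logb 2 (2 ^ n) + 2 - m) ∧
    (r : ℝ) * (Real.logb 2 (2 ^ n) + 2 - m)
        ≤ r * Real.logb 2 (4 * 2 ^ n / r) := by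
  have hr : 0 < r := (Nat.zero_le _).trans_lt hlow
  rw [logb_two_pow]
  exact ⟨countP_construct_le r hmn, two_pow_sub_one_add_mul_sub_lt hmn hlow,
    mul_add_two_sub_le_mul_logb_div hr hhigh⟩

/-- Let d = 2^n and 2^(m-1) < r ≤ 2^m with 1 ≤ m ≤ n. In the recursive matching
construction for dimension 2^n, the number of matchings containing a pair (j,k) with
|j - k| ≤ r is at most 2^m - 1 + r(n - m), which is strictly less than
r·(log₂ d + 2 - m), which is at most r·log₂(4d/r). -/
theorem stmt_13 (n m r : ℕ) (hm1 : 1 ≤ m) (hmn : m ≤ n) (hr1 : 1 ≤ r)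
    (hlow : 2 ^ (m - 1) < r) (hhigh : r ≤ 2 ^ m) :
    ((construct n).countP fun T => decide (∃ p ∈ T, p.2 - p.1 ≤ r))
        ≤ 2 ^ m - 1 + r * (n - m) ∧
    ((2 ^ m - 1 + r * (n - m) : ℕ) : ℝ)
        < r * (Real.logb 2 (2 ^ n) + 2 - m) ∧
    (r : ℝ) * (Real.logb 2 (2 ^ n) + 2 - m)
        ≤ r * Real.logb 2 (4 * 2 ^ n / r) :=
  stmt_13_general n m r hmn hlow hhigh
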